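/- A bipartite density operator ρ_AB on finite-dimensional H_A ⊗ H_B has zero-discord form Σ_j p_j ρ_j ⊗ |j⟩⟨j| (orthonormal {|j⟩}) if and only if there exists an orthonormal basis {|j⟩} of H_B such that ρ_AB commutes with I ⊗ |j⟩⟨j| for every j. -/

import Mathlib

/-!
If `ρ = ∑ⱼ pⱼ ρⱼ ⊗ |vⱼ⟩⟨vⱼ|`, extend the orthonormal family `(vⱼ)` to an orthonormal basis
`(w_a)` of `H_B`. Rank-one projectors onto distinct basis vectors multiply to zero, so every term
of the sum commutes with every `1 ⊗ |w_a⟩⟨w_a|`.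

Conversely, write `P_a = 1 ⊗ |w_a⟩⟨w_a| = X_a X_aᴴ` with the isometry `X_a : |i⟩ ↦ |i⟩ ⊗ |w_a⟩`.
The `P_a` are idempotent and sum to the identity, so if `ρ` commutes with all of them then
`ρ = ∑ ρ P_a = ∑ P_a ρ P_a = ∑ (X_aᴴ ρ X_a) ⊗ |w_a⟩⟨w_a|`. Each block `X_aᴴ ρ X_a` is positive
semidefinite, hence a nonnegative multiple of a density matrix.
-/

open Matrix Kronecker
open scoped ComplexOrder

/-- Partial trace over the first (A) factor. -/
noncomputable def ptraceA {nA nB : ℕ}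
    (M : Matrix (Fin nA × Fin nB) (Fin nA × Fin nB) ℂ) :
    Matrix (Fin nB) (Fin nB) ℂ :=
  fun j j' => ∑ i : Fin nA, M (i, j) (i, j')

/-- Rank-one outer product |v⟩⟨v|. -/
noncomputable def outer {n : ℕ} (v : Fin n → ℂ) : Matrix (Fin n) (Fin n) ℂ :=
  fun i i' => v i * star (v i')

/-- An orthonormal family of vectors. -/
def OrthonormalFam {n m : ℕ} (v : Fin m → Fin n → ℂ) : Prop :=
  ∀ j j', (∑ i, star (v j i) * v j' i) = if j = j' then 1 else 0

lemma Matrix.kronecker_sum {l m n p ι R : Type*} [CommSemiring R] (A : Matrix l m R)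
    (s : Finset ι) (B : ι → Matrix n p R) : A ⊗ₖ ∑ i ∈ s, B i = ∑ i ∈ s, A ⊗ₖ B i :=
  map_sum (kroneckerBilinear (R := R) A) B s

lemma Commute.kronecker {l m R : Type*} [Fintype l] [Fintype m] [CommRing R]
    {A A' : Matrix l l R} {B B' : Matrix m m R} (hA : Commute A A') (hB : Commute B B') :
    Commute (A ⊗ₖ B) (A' ⊗ₖ B') := by
  unfold Commute SemiconjBy
  rw [← mul_kronecker_mul, ← mul_kronecker_mul, hA.eq, hB.eq]

lemma Matrix.nonempty_of_trace_ne_zero {n R : Type*} [Fintype n] [AddCommMonoid R]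
    {A : Matrix n n R} (h : A.trace ≠ 0) : Nonempty n := by
  by_contra hn
  rw [not_nonempty_iff] at hn
  exact h (by simp [trace])

lemma Matrix.exists_posSemidef_trace_eq_one {ι : Type*} [Fintype ι] [DecidableEq ι]
    [Nonempty ι] : ∃ τ : Matrix ι ι ℂ, τ.PosSemidef ∧ τ.trace = 1 := by
  obtain ⟨i⟩ := ‹Nonempty ι›
  refine ⟨diagonal (Pi.single i 1), posSemidef_diagonal_iff.mpr fun k => ?_, by simp⟩
  by_cases h : k = i <;> simp [h]

lemma Matrix.PosSemidef.exists_eq_smul_trace_eq_one {ι : Type*} [Fintype ι] [DecidableEq ι]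
    [Nonempty ι] {σ : Matrix ι ι ℂ} (hσ : σ.PosSemidef) :
    ∃ p : ℝ, 0 ≤ p ∧ ∃ ρ : Matrix ι ι ℂ, (ρ.PosSemidef ∧ ρ.trace = 1) ∧ (p : ℂ) • ρ = σ := by
  obtain ⟨p, hp, hpσ⟩ := RCLike.nonneg_iff_exists_ofReal.mp hσ.trace_nonneg
  rcases hp.eq_or_lt with rfl | hpos
  · obtain ⟨τ, hτ⟩ := exists_posSemidef_trace_eq_one (ι := ι)
    refine ⟨0, le_rfl, τ, hτ, ?_⟩
    rw [hσ.trace_eq_zero_iff.mp (by simpa using hpσ.symm)]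
    simp
  · have hp0 : (p : ℂ) ≠ 0 := by exact_mod_cast hpos.ne'
    refine ⟨p, hp, (p : ℂ)⁻¹ • σ, ⟨hσ.smul ?_, ?_⟩, smul_inv_smul₀ hp0 σ⟩
    · simpa using inv_nonneg.mpr hp
    · rw [trace_smul, smul_eq_mul, ← hpσ]
      exact inv_mul_cancel₀ hp0

lemma outer_eq_vecMulVec {n : ℕ} (v : Fin n → ℂ) : outer v = vecMulVec v (star v) := rfl

lemma orthonormalFam_iff_orthonormal {n m : ℕ} {v : Fin m → Fin n → ℂ} :
    OrthonormalFam v ↔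
      Orthonormal ℂ (fun j => WithLp.toLp 2 (v j) : Fin m → EuclideanSpace ℂ (Fin n)) := by
  rw [orthonormal_iff_ite, OrthonormalFam]
  simp [PiLp.inner_apply, mul_comm]

namespace OrthonormalFam

variable {n m : ℕ} {v : Fin m → Fin n → ℂ}

lemma star_dotProduct (hv : OrthonormalFam v) (j j' : Fin m) :
    star (v j) ⬝ᵥ v j' = if j = j' then 1 else 0 :=
  hv j j'

lemma outer_mul_outer (hv : OrthonormalFam v) (j j' : Fin m) :
    outer (v j) * outer (v j') = if j = j' then outer (v j) else 0 := by
  rw [outer_eq_vecMulVec, outer_eq_vecMulVec, vecMulVec_mul_vecMulVec, hv.star_dotProduct]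
  split_ifs with h
  · rw [one_smul, h]
  · rw [zero_smul, vecMulVec_zero]

lemma commute_outer (hv : OrthonormalFam v) (j j' : Fin m) :
    Commute (outer (v j)) (outer (v j')) := by
  unfold Commute SemiconjBy
  rw [hv.outer_mul_outer, hv.outer_mul_outer]
  by_cases h : j = j'
  · simp [h]
  · simp [h, Ne.symm h]

lemma sum_outer {w : Fin n → Fin n → ℂ} (hw : OrthonormalFam w) : ∑ j, outer (w j) = 1 := by
  let U : Matrix (Fin n) (Fin n) ℂ := of fun i j => w j i
  have hU : Uᴴ * U = 1 := by
    ext j j'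
    simpa [mul_apply, U, one_apply] using hw j j'
  have hUU : U * Uᴴ = 1 := mul_eq_one_comm.mp hU
  ext i i'
  simpa [mul_apply, U, Matrix.sum_apply, outer] using congrFun (congrFun hUU i) i'

lemma exists_extension (hv : OrthonormalFam v) :
    ∃ w : Fin n → Fin n → ℂ, OrthonormalFam w ∧ ∀ k, ∃ a, w a = v k := by
  obtain ⟨u, b, hvu, hb⟩ :=
    (orthonormalFam_iff_orthonormal.mp hv).toSubtypeRange.exists_orthonormalBasis_extension
  have hcard : Fintype.card u = n := by
    simpa using (Module.finrank_eq_card_basis b.toBasis).symm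
  let b' := b.reindex (Fintype.equivFinOfCardEq hcard)
  refine ⟨fun a => b' a, orthonormalFam_iff_orthonormal.mpr b'.orthonormal, fun k => ?_⟩
  have hk : WithLp.toLp 2 (v k) ∈ u := hvu ⟨k, rfl⟩
  refine ⟨Fintype.equivFinOfCardEq hcard ⟨_, hk⟩, ?_⟩
  simp [b', hb]

end OrthonormalFam

lemma commute_sum_kronecker_outer {nA nB m : ℕ} {w : Fin nB → Fin nB → ℂ}
    (hw : OrthonormalFam w) {v : Fin m → Fin nB → ℂ} (hvw : ∀ k, ∃ a, w a = v k)
    (c : Fin m → ℂ) (ρ : Fin m → Matrix (Fin nA) (Fin nA) ℂ) (j : Fin nB) :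
    Commute (∑ k, c k • (ρ k ⊗ₖ outer (v k))) (1 ⊗ₖ outer (w j)) := by
  refine Commute.sum_left _ _ _ fun k _ => Commute.smul_left ?_ _
  obtain ⟨a, hak⟩ := hvw k
  rw [← hak]
  exact (Commute.one_right _).kronecker (hw.commute_outer a j)

section KroneckerVec

variable {ι κ R : Type*} [Fintype ι] [DecidableEq ι] [CommRing R] [StarRing R]

variable (ι) in
def kroneckerVec (w : κ → R) : Matrix (ι × κ) ι R :=
  Matrix.of fun p a => if p.1 = a then w p.2 else 0

lemma kroneckerVec_mul_mul_conjTranspose (w : κ → R) (N : Matrix ι ι R) :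
    kroneckerVec ι w * N * (kroneckerVec ι w)ᴴ = N ⊗ₖ vecMulVec w (star w) := by
  ext ⟨a, b⟩ ⟨a', b'⟩
  simp [kroneckerVec, mul_apply, vecMulVec_apply, apply_ite star, mul_ite]
  ring

lemma conjTranspose_kroneckerVec_mul_kroneckerVec [Fintype κ] {w : κ → R}
    (hw : star w ⬝ᵥ w = 1) : (kroneckerVec ι w)ᴴ * kroneckerVec ι w = 1 := by
  ext a a'
  by_cases h : a = a'
  · subst h
    simpa [kroneckerVec, mul_apply, Fintype.sum_prod_type, dotProduct] using hw
  · simp [kroneckerVec, mul_apply, Fintype.sum_prod_type, h, Ne.symm h]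

end KroneckerVec

lemma eq_sum_kronecker_of_commute {nA nB : ℕ} {w : Fin nB → Fin nB → ℂ}
    (hw : OrthonormalFam w) {M : Matrix (Fin nA × Fin nB) (Fin nA × Fin nB) ℂ}
    (hM : ∀ j, Commute M (1 ⊗ₖ outer (w j))) :
    M = ∑ j,
      ((kroneckerVec (Fin nA) (w j))ᴴ * M * kroneckerVec (Fin nA) (w j)) ⊗ₖ outer (w j) := by
  have hblock : ∀ j, M * (1 ⊗ₖ outer (w j)) =
      ((kroneckerVec (Fin nA) (w j))ᴴ * M * kroneckerVec (Fin nA) (w j)) ⊗ₖ outer (w j) := by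
    intro j
    set X := kroneckerVec (Fin nA) (w j)
    have hXX : Xᴴ * X = 1 :=
      conjTranspose_kroneckerVec_mul_kroneckerVec (by simpa using hw.star_dotProduct j j)
    have hP : 1 ⊗ₖ outer (w j) = X * Xᴴ := by
      simpa [outer_eq_vecMulVec] using
        (kroneckerVec_mul_mul_conjTranspose (w j) (1 : Matrix (Fin nA) (Fin nA) ℂ)).symm
    calc M * (1 ⊗ₖ outer (w j)) = M * (X * (Xᴴ * X) * Xᴴ) := by rw [hXX, Matrix.mul_one, hP]
      _ = M * (X * Xᴴ) * (X * Xᴴ) := by simp only [Matrix.mul_assoc]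
      _ = X * Xᴴ * M * (X * Xᴴ) := by rw [← hP, (hM j).eq]
      _ = X * (Xᴴ * M * X) * Xᴴ := by simp only [Matrix.mul_assoc]
      _ = _ := by rw [kroneckerVec_mul_mul_conjTranspose, outer_eq_vecMulVec]
  calc M = M * (1 ⊗ₖ ∑ j, outer (w j)) := by rw [hw.sum_outer, one_kronecker_one, Matrix.mul_one]
    _ = _ := by
      rw [Matrix.kronecker_sum, Matrix.mul_sum]
      exact Finset.sum_congr rfl fun j _ => hblock j

theorem stmt10 {nA nB : ℕ}
    (ρAB : Matrix (Fin nA × Fin nB) (Fin nA × Fin nB) ℂ)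
    (hρAB : ρAB.PosSemidef) (hρtr : ρAB.trace = 1) :
    (∃ (m : ℕ) (v : Fin m → Fin nB → ℂ) (p : Fin m → ℝ)
        (ρ : Fin m → Matrix (Fin nA) (Fin nA) ℂ),
      OrthonormalFam v ∧ (∀ j, 0 ≤ p j) ∧
      (∀ j, (ρ j).PosSemidef ∧ (ρ j).trace = 1) ∧
      ρAB = ∑ j, (p j : ℂ) • ((ρ j) ⊗ₖ outer (v j)))
    ↔
    (∃ w : Fin nB → Fin nB → ℂ, OrthonormalFam w ∧
      ∀ j, ρAB * ((1 : Matrix (Fin nA) (Fin nA) ℂ) ⊗ₖ outer (w j)) =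
        ((1 : Matrix (Fin nA) (Fin nA) ℂ) ⊗ₖ outer (w j)) * ρAB) := by
  constructor
  · rintro ⟨m, v, p, ρ, hv, -, -, rfl⟩
    obtain ⟨w, hw, hvw⟩ := hv.exists_extension
    exact ⟨w, hw, fun j => (commute_sum_kronecker_outer hw hvw _ ρ j).eq⟩
  · rintro ⟨w, hw, hcomm⟩
    have : Nonempty (Fin nA) :=
      (nonempty_of_trace_ne_zero (hρtr ▸ one_ne_zero)).map Prod.fst
    choose p hp ρ hρ hσ using fun j =>
      (hρAB.conjTranspose_mul_mul_same (kroneckerVec (Fin nA) (w j))).exists_eq_smul_trace_eq_one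
    refine ⟨nB, w, p, ρ, hw, hp, hρ, ?_⟩
    rw [eq_sum_kronecker_of_commute hw hcomm]
    simp_rw [← hσ, smul_kronecker]
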